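/- Suppose the constants satisfy the hierarchy 1/n ≪ ε₃ ≪ 1. Let G be a digraph on n vertices with δ⁰(G) ≥ n/2 and suppose A, B, S, T is a partition of V(G) satisfying (Q0)–(Q8), with |A| = a, |B| = b and b = a + d for some d > 0. Then there is a matching of size d+2 in E(B∪T, B). -/

import Mathlib

open Finset

open scoped Classical

noncomputable section

variable {n : ℕ}

/-- Number of outneighbours of `x` lying in `X`, in the digraph with edge set `G`. -/
def dPlus (G : Finset (Fin n × Fin n)) (X : Finset (Fin n)) (x : Fin n) : ℕ :=
  (G.filter fun e => e.1 = x ∧ e.2 ∈ X).card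

/-- Number of inneighbours of `x` lying in `X`. -/
def dMinus (G : Finset (Fin n × Fin n)) (X : Finset (Fin n)) (x : Fin n) : ℕ :=
  (G.filter fun e => e.2 = x ∧ e.1 ∈ X).card

/-- The minimum semidegree of `G` is at least `r`. -/
def MinSemi (G : Finset (Fin n × Fin n)) (r : ℝ) : Prop :=
  ∀ x : Fin n, r ≤ (dPlus G Finset.univ x : ℝ) ∧ r ≤ (dMinus G Finset.univ x : ℝ)

/-- `A, B, S, T` is a partition of the vertex set. -/
def Partition4 (A B S T : Finset (Fin n)) : Prop :=
  A ∪ B ∪ S ∪ T = Finset.univ ∧ Disjoint A B ∧ Disjoint A S ∧ Disjoint A T ∧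
    Disjoint B S ∧ Disjoint B T ∧ Disjoint S T

/-- Property (Q0): `a ≤ b` and `s ≤ t`. -/
def Q0 (A B S T : Finset (Fin n)) : Prop := A.card ≤ B.card ∧ S.card ≤ T.card

/-- Properties (Q1)–(Q8) of an `AB`-extremal partition. -/
def Qconds (G : Finset (Fin n × Fin n)) (A B S T : Finset (Fin n)) (ε₃ : ℝ) : Prop :=
  -- (Q1)
  (((n / 2 : ℕ) : ℝ) - ε₃ * n ≤ (A.card : ℝ) ∧
    (A.card : ℝ) ≤ (((n + 1) / 2 : ℕ) : ℝ) + ε₃ * n ∧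
    ((n / 2 : ℕ) : ℝ) - ε₃ * n ≤ (B.card : ℝ) ∧
    (B.card : ℝ) ≤ (((n + 1) / 2 : ℕ) : ℝ) + ε₃ * n) ∧
  -- (Q2)
  ((∀ x ∈ A, (n : ℝ) / 50 ≤ (dPlus G B x : ℝ) ∧ (n : ℝ) / 50 ≤ (dMinus G B x : ℝ)) ∧
    (∀ x ∈ B, (n : ℝ) / 50 ≤ (dPlus G A x : ℝ) ∧ (n : ℝ) / 50 ≤ (dMinus G A x : ℝ))) ∧
  -- (Q3)
  (((A.filter fun x => ¬((n : ℝ) / 2 - ε₃ * n ≤ (dPlus G B x : ℝ) ∧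
      (n : ℝ) / 2 - ε₃ * n ≤ (dMinus G B x : ℝ))).card : ℝ) ≤ ε₃ * n) ∧
  -- (Q4)
  (((B.filter fun x => ¬((n : ℝ) / 2 - ε₃ * n ≤ (dPlus G A x : ℝ) ∧
      (n : ℝ) / 2 - ε₃ * n ≤ (dMinus G A x : ℝ))).card : ℝ) ≤ ε₃ * n) ∧
  -- (Q5)
  ((S.card : ℝ) + (T.card : ℝ) ≤ ε₃ * n) ∧
  -- (Q6)
  (∀ x ∈ S, (n : ℝ) / 50 ≤ (dMinus G A x : ℝ) ∧ (n : ℝ) / 50 ≤ (dPlus G B x : ℝ)) ∧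
  -- (Q7)
  (∀ x ∈ T, (n : ℝ) / 50 ≤ (dMinus G B x : ℝ) ∧ (n : ℝ) / 50 ≤ (dPlus G A x : ℝ)) ∧
  -- (Q8)
  (A.card < B.card →
    (∀ x ∈ B, (dPlus G B x : ℝ) < (n : ℝ) / 20 ∧ (dMinus G B x : ℝ) < (n : ℝ) / 20) ∧
    (∀ x ∈ S, (dMinus G B x : ℝ) < (n : ℝ) / 20) ∧
    (∀ x ∈ T, (dPlus G B x : ℝ) < (n : ℝ) / 20))

/-!
Build the matching greedily. Suppose a matching in `E(B ∪ T, B)` with at most `d + 1` edges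
has been built, and let `W` be its vertex set. Every `y ∈ B \ W` has at least `n/2`
inneighbours, at most `a + s` of them outside `B ∪ T`; since `n = 2a + d + s + t` and `s ≤ t`,
at least `d/2` of them lie in `B ∪ T`. Summed over the `≈ n/2` vertices of `B \ W`, this gives
`≈ nd/4` edges from `B ∪ T` into `B \ W`. By (Q8) each of the at most `2d + 2` vertices of
`(B ∪ T) ∩ W` sends fewer than `n/20` edges into `B`, so some edge goes from `(B ∪ T) \ W` to
`B \ W` and extends the matching.
-/

section Matching

variable {α : Type*}

def IsMatching (M : Finset (α × α)) : Prop :=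
  ∀ e ∈ M, ∀ f ∈ M, e ≠ f → e.1 ≠ f.1 ∧ e.1 ≠ f.2 ∧ e.2 ≠ f.1 ∧ e.2 ≠ f.2

def verts (M : Finset (α × α)) : Finset α :=
  M.image Prod.fst ∪ M.image Prod.snd

lemma fst_mem_verts {M : Finset (α × α)} {e : α × α} (he : e ∈ M) : e.1 ∈ verts M :=
  mem_union_left _ (mem_image_of_mem _ he)

lemma snd_mem_verts {M : Finset (α × α)} {e : α × α} (he : e ∈ M) : e.2 ∈ verts M :=
  mem_union_right _ (mem_image_of_mem _ he)

lemma card_verts_le (M : Finset (α × α)) : (verts M).card ≤ 2 * M.card :=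
  calc (verts M).card ≤ (M.image Prod.fst).card + (M.image Prod.snd).card := card_union_le _ _
    _ ≤ M.card + M.card := add_le_add card_image_le card_image_le
    _ = 2 * M.card := (two_mul _).symm

lemma IsMatching.insert {M : Finset (α × α)} (hM : IsMatching M) {e : α × α}
    (h1 : e.1 ∉ verts M) (h2 : e.2 ∉ verts M) : IsMatching (insert e M) := by
  intro f hf g hg hfg
  rcases mem_insert.mp hf with rfl | hfM <;> rcases mem_insert.mp hg with rfl | hgM
  · exact absurd rfl hfg
  · exact ⟨fun h => h1 (h ▸ fst_mem_verts hgM), fun h => h1 (h ▸ snd_mem_verts hgM),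
      fun h => h2 (h ▸ fst_mem_verts hgM), fun h => h2 (h ▸ snd_mem_verts hgM)⟩
  · exact ⟨fun h => h1 (h ▸ fst_mem_verts hfM), fun h => h2 (h ▸ fst_mem_verts hfM),
      fun h => h1 (h ▸ snd_mem_verts hfM), fun h => h2 (h ▸ snd_mem_verts hfM)⟩
  · exact hM f hfM g hgM hfg

theorem exists_isMatching_card_eq {E : Finset (α × α)} {m : ℕ}
    (hext : ∀ M ⊆ E, IsMatching M → M.card < m →
      ∃ e ∈ E, e.1 ∉ verts M ∧ e.2 ∉ verts M) :
    ∃ M ⊆ E, IsMatching M ∧ M.card = m := by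
  suffices ∀ k ≤ m, ∃ M ⊆ E, IsMatching M ∧ M.card = k from this m le_rfl
  intro k
  induction k with
  | zero => exact fun _ => ⟨∅, empty_subset _, by simp [IsMatching], rfl⟩
  | succ k ih =>
    intro hk
    obtain ⟨M, hME, hM, rfl⟩ := ih (by omega)
    obtain ⟨e, heE, h1, h2⟩ := hext M hME hM (by omega)
    have heM : e ∉ M := fun he => h1 (fst_mem_verts he)
    exact ⟨insert e M, insert_subset heE hME, hM.insert h1 h2, card_insert_of_notMem heM⟩

end Matching

section Degrees

variable (G : Finset (Fin n × Fin n))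

lemma dMinus_mono {X Y : Finset (Fin n)} (h : X ⊆ Y) (v : Fin n) :
    dMinus G X v ≤ dMinus G Y v :=
  card_le_card fun _ he => by
    simp only [mem_filter] at he ⊢
    exact ⟨he.1, he.2.1, h he.2.2⟩

lemma dPlus_mono {X Y : Finset (Fin n)} (h : X ⊆ Y) (v : Fin n) :
    dPlus G X v ≤ dPlus G Y v :=
  card_le_card fun _ he => by
    simp only [mem_filter] at he ⊢
    exact ⟨he.1, he.2.1, h he.2.2⟩

lemma dMinus_union_le (X Y : Finset (Fin n)) (v : Fin n) :
    dMinus G (X ∪ Y) v ≤ dMinus G X v + dMinus G Y v := by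
  unfold dMinus
  rw [← card_union_add_card_inter]
  refine le_add_right (card_le_card fun e he => ?_)
  simp only [mem_filter, mem_union] at he ⊢
  tauto

lemma dMinus_le_card (X : Finset (Fin n)) (v : Fin n) : dMinus G X v ≤ X.card :=
  card_le_card_of_injOn Prod.fst (fun _ he => (mem_filter.mp he).2.2)
    fun _ he _ hf hef => Prod.ext hef ((mem_filter.mp he).2.1.trans (mem_filter.mp hf).2.1.symm)

lemma sum_dMinus (X Y : Finset (Fin n)) :
    ∑ y ∈ Y, dMinus G X y = (G.filter fun e => e.1 ∈ X ∧ e.2 ∈ Y).card := by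
  rw [card_eq_sum_card_fiberwise (f := Prod.snd) (t := Y) fun e he => (mem_filter.mp he).2.2]
  refine sum_congr rfl fun y hy => ?_
  rw [filter_filter]
  exact congrArg card (filter_congr fun e _ => ⟨fun h => ⟨⟨h.2, h.1 ▸ hy⟩, h.1⟩,
    fun h => ⟨h.2, h.1.1⟩⟩)

lemma sum_dPlus (X Y : Finset (Fin n)) :
    ∑ x ∈ X, dPlus G Y x = (G.filter fun e => e.1 ∈ X ∧ e.2 ∈ Y).card := by
  rw [card_eq_sum_card_fiberwise (f := Prod.fst) (t := X) fun e he => (mem_filter.mp he).2.1]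
  refine sum_congr rfl fun x hx => ?_
  rw [filter_filter]
  exact congrArg card (filter_congr fun e _ => ⟨fun h => ⟨⟨h.1 ▸ hx, h.2⟩, h.1⟩,
    fun h => ⟨h.2, h.1.2⟩⟩)

lemma dMinus_univ_le (X W : Finset (Fin n)) (y : Fin n) :
    dMinus G univ y ≤ Xᶜ.card + dMinus G (X ∩ W) y + dMinus G (X \ W) y := by
  have hcover : (univ : Finset (Fin n)) ⊆ Xᶜ ∪ ((X ∩ W) ∪ (X \ W)) := by
    rw [union_comm (X ∩ W), sdiff_union_inter, union_comm, union_compl]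
  calc dMinus G univ y ≤ dMinus G Xᶜ y + (dMinus G (X ∩ W) y + dMinus G (X \ W) y) :=
        (dMinus_mono G hcover y).trans <| (dMinus_union_le G _ _ y).trans <|
          Nat.add_le_add_left (dMinus_union_le G _ _ y) _
    _ ≤ Xᶜ.card + dMinus G (X ∩ W) y + dMinus G (X \ W) y := by
        linarith [dMinus_le_card G Xᶜ y]

theorem exists_edge_sdiff {X Y W : Finset (Fin n)} {δ Δ : ℝ}
    (hδ : ∀ y ∈ Y \ W, δ ≤ dMinus G univ y) (hΔ : ∀ u ∈ X ∩ W, dPlus G Y u ≤ Δ)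
    (hlt : ((X ∩ W).card : ℝ) * Δ < (Y \ W).card * (δ - Xᶜ.card)) :
    ∃ e ∈ G, e.1 ∈ X \ W ∧ e.2 ∈ Y \ W := by
  set N := (G.filter fun e => e.1 ∈ X \ W ∧ e.2 ∈ Y \ W).card
  have hlow : ((Y \ W).card : ℝ) * (δ - Xᶜ.card) ≤
      ∑ y ∈ Y \ W, (dMinus G (X ∩ W) y : ℝ) + N := by
    have h := sum_le_sum fun y hy => (hδ y hy).trans
      (Nat.cast_le.mpr (dMinus_univ_le G X W y) : (_ : ℝ) ≤ _)
    push_cast at h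
    rw [sum_const, nsmul_eq_mul, sum_add_distrib, sum_add_distrib, sum_const, nsmul_eq_mul,
      ← Nat.cast_sum (s := Y \ W) (f := dMinus G (X \ W)), sum_dMinus] at h
    linarith
  have hhigh : ∑ y ∈ Y \ W, (dMinus G (X ∩ W) y : ℝ) ≤ (X ∩ W).card * Δ := by
    rw [← Nat.cast_sum, sum_dMinus, ← sum_dPlus, Nat.cast_sum, ← nsmul_eq_mul, ← sum_const]
    exact sum_le_sum fun u hu => (Nat.cast_le.mpr (dPlus_mono G sdiff_subset u)).trans (hΔ u hu)
  have hN : 0 < N := by exact_mod_cast (show (0 : ℝ) < N by linarith)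
  obtain ⟨e, he⟩ := card_pos.mp hN
  exact ⟨e, (mem_filter.mp he).1, (mem_filter.mp he).2⟩

end Degrees

lemma Partition4.card_add {A B S T : Finset (Fin n)} (h : Partition4 A B S T) :
    A.card + B.card + S.card + T.card = n := by
  obtain ⟨hU, hAB, hAS, hAT, hBS, hBT, hST⟩ := h
  have := congrArg card hU
  rwa [card_union_of_disjoint (disjoint_union_left.mpr
      ⟨disjoint_union_left.mpr ⟨hAT, hBT⟩, hST⟩),
    card_union_of_disjoint (disjoint_union_left.mpr ⟨hAS, hBS⟩),
    card_union_of_disjoint hAB, card_univ, Fintype.card_fin] at this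

lemma Partition4.add_two_mul_card_compl_le {A B S T : Finset (Fin n)} (hpart : Partition4 A B S T)
    (hq0 : Q0 A B S T) {d : ℕ} (hbd : B.card = A.card + d) : d + 2 * (B ∪ T)ᶜ.card ≤ n := by
  have hcompl := card_compl_add_card (B ∪ T)
  rw [card_union_of_disjoint hpart.2.2.2.2.2.1, Fintype.card_fin] at hcompl
  have := hpart.card_add
  have := hq0.2
  omega

theorem exists_edge_sdiff_of_Qconds {ε₃ : ℝ} (hε₃ : ε₃ ≤ 1 / 200) (hn : 200 ≤ n)
    {G : Finset (Fin n × Fin n)} (hdeg : MinSemi G ((n : ℝ) / 2))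
    {A B S T : Finset (Fin n)} (hpart : Partition4 A B S T) (hq0 : Q0 A B S T)
    (hq : Qconds G A B S T ε₃) {d : ℕ} (hd : 0 < d) (hbd : B.card = A.card + d)
    {W : Finset (Fin n)} (hW : W.card ≤ 2 * (d + 1)) :
    ∃ e ∈ G, e.1 ∈ (B ∪ T) \ W ∧ e.2 ∈ B \ W := by
  obtain ⟨⟨hA, -, hB, hB'⟩, -, -, -, -, -, -, hq8⟩ := hq
  obtain ⟨hq8B, -, hq8T⟩ := hq8 (by omega)
  refine exists_edge_sdiff G (δ := n / 2) (Δ := n / 20) (fun y _ => (hdeg y).2)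
    (fun u hu => ?_) ?_
  · refine le_of_lt ?_
    rcases mem_union.mp (mem_inter.mp hu).1 with huB | huT
    exacts [(hq8B u huB).1, hq8T u huT]
  have hY := card_le_card_sdiff_add_card (s := B) (t := W)
  have hXW := card_le_card (inter_subset_right (s₁ := B ∪ T) (s₂ := W))
  have hfloor : n ≤ 2 * (n / 2) + 1 ∧ (n + 1) / 2 ≤ n / 2 + 1 := by omega
  have hεn : ε₃ * n ≤ n / 200 := by
    have := mul_le_mul_of_nonneg_right hε₃ (Nat.cast_nonneg (α := ℝ) n)
    linarith
  have hnR : (200 : ℝ) ≤ n := by exact_mod_cast hn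
  have hdR : (1 : ℝ) ≤ d := by exact_mod_cast hd
  have hgap : (d : ℝ) / 2 ≤ n / 2 - (B ∪ T)ᶜ.card := by
    have : (d : ℝ) + 2 * (B ∪ T)ᶜ.card ≤ n := by
      exact_mod_cast hpart.add_two_mul_card_compl_le hq0 hbd
    linarith
  -- by (Q1), `d ≤ 1 + 2 ε₃ n` and `b ≥ n/2 - 1/2 - ε₃ n`
  have hBW : 0.45 * (n : ℝ) ≤ (B \ W).card := by
    have hd' : (d : ℝ) ≤ 1 + 2 * (ε₃ * n) := by
      have : ((n + 1) / 2 : ℕ) ≤ (n / 2 : ℕ) + (1 : ℝ) := by exact_mod_cast hfloor.2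
      push_cast [hbd] at hA hB'
      linarith
    have : (n : ℝ) ≤ 2 * (n / 2 : ℕ) + 1 := by exact_mod_cast hfloor.1
    have : (B.card : ℝ) ≤ (B \ W).card + W.card := by exact_mod_cast hY
    have : (W.card : ℝ) ≤ 2 * (d + 1) := by exact_mod_cast hW
    linarith
  have hXWR : (((B ∪ T) ∩ W).card : ℝ) ≤ 2 * (d + 1) := by exact_mod_cast hXW.trans hW
  calc (((B ∪ T) ∩ W).card : ℝ) * (n / 20) ≤ 2 * (d + 1) * (n / 20) := by gcongr
    _ < 0.45 * n * (d / 2) := by nlinarith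
    _ ≤ (B \ W).card * (n / 2 - (B ∪ T)ᶜ.card) := by gcongr

/-- if `1/n ≪ ε₃ ≪ 1`, `δ⁰(G) ≥ n/2`, `A,B,S,T` is a partition satisfying
(Q0)–(Q8) and `b = a + d` with `d > 0`, then there is a matching of size `d+2` in
`E(B∪T, B)`. -/
theorem stmt_12 :
    ∃ ε₃max : ℝ, 0 < ε₃max ∧ ∀ ε₃ : ℝ, 0 < ε₃ → ε₃ ≤ ε₃max →
    ∃ n₀ : ℕ, ∀ n : ℕ, n₀ ≤ n →
    ∀ G : Finset (Fin n × Fin n), (∀ e ∈ G, e.1 ≠ e.2) →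
      MinSemi G ((n : ℝ) / 2) →
      ∀ A B S T : Finset (Fin n), Partition4 A B S T → Q0 A B S T → Qconds G A B S T ε₃ →
      ∀ d : ℕ, 0 < d → B.card = A.card + d →
      ∃ M : Finset (Fin n × Fin n), M ⊆ G ∧ M.card = d + 2 ∧
        (∀ e ∈ M, e.1 ∈ B ∪ T ∧ e.2 ∈ B) ∧
        (∀ e ∈ M, ∀ f ∈ M, e ≠ f →
          e.1 ≠ f.1 ∧ e.1 ≠ f.2 ∧ e.2 ≠ f.1 ∧ e.2 ≠ f.2) := by
  refine ⟨1 / 200, by norm_num, fun ε₃ _ hε₃ =>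
    ⟨200, fun n hn G _ hdeg A B S T hpart hq0 hq d hd hbd => ?_⟩⟩
  obtain ⟨M, hME, hM, hcard⟩ := exists_isMatching_card_eq
    (E := G.filter fun e => e.1 ∈ B ∪ T ∧ e.2 ∈ B) (m := d + 2) fun M _ _ hM => by
      obtain ⟨e, heG, he1, he2⟩ := exists_edge_sdiff_of_Qconds hε₃ hn hdeg hpart hq0 hq hd hbd
        ((card_verts_le M).trans (by omega))
      exact ⟨e, mem_filter.mpr ⟨heG, (mem_sdiff.mp he1).1, (mem_sdiff.mp he2).1⟩,
        (mem_sdiff.mp he1).2, (mem_sdiff.mp he2).2⟩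
  exact ⟨M, hME.trans (filter_subset _ _), hcard, fun e he => (mem_filter.mp (hME he)).2, hM⟩
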